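/- Let κ be a real number with 8/3 < κ < 8, set α = (8 − κ)(3κ − 8)/(32κ), and for x > 0 define p_κ(x) = (−κ cos(4π/κ)/(4π)) · Σ_{j=0}^∞ (−1)^j (j + 1/2) exp(−((j + 1/2)² − (1 − 4/κ)²)·κ·x/8). Then α = (1/4 − (1 − 4/κ)²)·κ/8, and e^{αx}·p_κ(x) converges to −κ cos(4π/κ)/(8π) as x → ∞; consequently, e^{αx}·∫_x^∞ p_κ(t) dt converges to −κ cos(4π/κ)/(8πα) as x → ∞, so the tail probability ∫_x^∞ p_κ(t) dt is asymptotically comparable to e^{−αx}. -/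

import Mathlib

open scoped Real Topology
open MeasureTheory Filter

/-- The density of `B_k^z`: the exit-time density of Brownian motion from
`(-2π/√κ, 2π/√κ)`, reweighted by `exp((κ-4)²x/(8κ))`. -/
noncomputable def pdens (κ x : ℝ) : ℝ :=
  (-κ * Real.cos (4 * π / κ) / (4 * π)) *
    ∑' j : ℕ, (-1) ^ j * ((j : ℝ) + 1 / 2) *
      Real.exp (-((((j : ℝ) + 1 / 2) ^ 2 - (1 - 4 / κ) ^ 2) * κ * x / 8))

/-- Auxiliary: the exponential rate of the `j`-th term. -/
noncomputable def acoef (κ : ℝ) (j : ℕ) : ℝ :=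
  (((j : ℝ) + 1 / 2) ^ 2 - (1 - 4 / κ) ^ 2) * κ / 8

/-- Auxiliary: the prefactor constant. -/
noncomputable def cconst (κ : ℝ) : ℝ := -κ * Real.cos (4 * π / κ) / (4 * π)

lemma pdens_eq (κ x : ℝ) :
    pdens κ x = cconst κ * ∑' j : ℕ, (-1) ^ j * ((j : ℝ) + 1 / 2) *
      Real.exp (-(acoef κ j * x)) := by
  simp only [pdens, cconst]
  congr 1
  refine tsum_congr fun j => ?_
  congr 2
  simp only [acoef]; ring

lemma my_integral_exp_neg_mul_Ioi {b : ℝ} (hb : 0 < b) (a : ℝ) :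
    ∫ t in Set.Ioi a, Real.exp (-(b * t)) = Real.exp (-(b * a)) / b := by
  have hderiv : ∀ t ∈ Set.Ici a, HasDerivAt (fun t => -(Real.exp (-(b * t)) / b))
      (Real.exp (-(b * t))) t := by
    intro t _
    have h1 : HasDerivAt (fun t : ℝ => -(b * t)) (-b) t := by
      exact ((hasDerivAt_id t).const_mul b).neg.congr_deriv (by ring)
    have h2 := (h1.exp.div_const b).neg
    convert h2 using 1
    · rfl
    · rfl
    · rfl
    · field_simp
  have hint : IntegrableOn (fun t => Real.exp (-(b * t))) (Set.Ioi a) := by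
    simpa [neg_mul] using exp_neg_integrableOn_Ioi a hb
  have htend : Tendsto (fun t => -(Real.exp (-(b * t)) / b)) atTop (𝓝 0) := by
    have h1 : Tendsto (fun t : ℝ => -(b * t)) atTop atBot := by
      exact tendsto_neg_atTop_atBot.comp (tendsto_id.const_mul_atTop hb)
    have := Real.tendsto_exp_atBot.comp h1
    simpa using ((this.div_const b).neg)
  have := MeasureTheory.integral_Ioi_of_hasDerivAt_of_tendsto' hderiv hint htend
  rw [this]; ring

lemma summable_exp_aux (c : ℝ) (hc : 0 < c) :
    Summable (fun j : ℕ => ((j : ℝ) + 1) * Real.exp (-((j : ℝ) * ((j : ℝ) + 1) * c))) := by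
  have hr : ‖Real.exp (-c)‖ < 1 := by
    rw [Real.norm_eq_abs, abs_of_pos (Real.exp_pos _)]
    exact Real.exp_lt_one_iff.mpr (by linarith)
  have h1 : Summable (fun j : ℕ => ((j : ℝ) + 1) * Real.exp (-c) ^ j) := by
    have := (summable_pow_mul_geometric_of_norm_lt_one 1 hr).add
      (summable_geometric_of_norm_lt_one hr)
    exact this.congr (fun j => by ring)
  refine Summable.of_nonneg_of_le (fun j => by positivity) (fun j => ?_) h1
  have hj : (0:ℝ) ≤ (j : ℝ) := Nat.cast_nonneg j
  have : Real.exp (-((j:ℝ) * ((j:ℝ) + 1) * c)) ≤ Real.exp (-c) ^ j := by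
    rw [← Real.exp_nat_mul]
    exact Real.exp_le_exp.mpr (by nlinarith [mul_nonneg (mul_nonneg hj hj) hc.le])
  exact mul_le_mul_of_nonneg_left this (by positivity)

lemma tendsto_core {c : ℝ} (hc : 0 < c) (b : ℕ → ℝ) (C : ℝ)
    (hb : ∀ j, |b j| ≤ C * ((j : ℝ) + 1)) :
    Tendsto (fun x : ℝ => ∑' j : ℕ, b j * Real.exp (-((j : ℝ) * ((j : ℝ) + 1) * c) * x))
      atTop (𝓝 (b 0)) := by
  have h := tendsto_tsum_of_dominated_convergence (𝓕 := atTop)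
    (f := fun (x : ℝ) (j : ℕ) => b j * Real.exp (-((j : ℝ) * ((j : ℝ) + 1) * c) * x))
    (g := fun j : ℕ => if j = 0 then b 0 else 0)
    (bound := fun j : ℕ => C * (((j : ℝ) + 1) * Real.exp (-((j : ℝ) * ((j : ℝ) + 1) * c))))
    ((summable_exp_aux c hc).mul_left C) ?_ ?_
  · simpa [tsum_ite_eq] using h
  · intro k
    rcases Nat.eq_zero_or_pos k with rfl | hk
    · simpa using tendsto_const_nhds
    · have hk' : (0:ℝ) < (k : ℝ) := by exact_mod_cast hk
      have h2 : Tendsto (fun x : ℝ => ((k : ℝ) * ((k : ℝ) + 1) * c) * x) atTop atTop :=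
        tendsto_id.const_mul_atTop (by positivity)
      have h1 : Tendsto (fun x : ℝ => -((k : ℝ) * ((k : ℝ) + 1) * c * x)) atTop atBot :=
        tendsto_neg_atTop_atBot.comp h2
      have := (Real.tendsto_exp_atBot.comp h1).const_mul (b k)
      simpa [hk.ne', neg_mul] using this
  · filter_upwards [eventually_ge_atTop (1:ℝ)] with x hx
    intro k
    have hd0 : (0:ℝ) ≤ (k : ℝ) * ((k : ℝ) + 1) * c := by positivity
    have he : Real.exp (-((k:ℝ) * ((k:ℝ) + 1) * c) * x) ≤
        Real.exp (-((k:ℝ) * ((k:ℝ) + 1) * c)) :=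
      Real.exp_le_exp.mpr (by nlinarith)
    have hC : (0:ℝ) ≤ C * ((k:ℝ) + 1) := le_trans (abs_nonneg _) (hb k)
    calc ‖b k * Real.exp (-((k:ℝ) * ((k:ℝ) + 1) * c) * x)‖
        = |b k| * Real.exp (-((k:ℝ) * ((k:ℝ) + 1) * c) * x) := by
          rw [norm_mul, Real.norm_eq_abs, Real.norm_eq_abs, abs_of_pos (Real.exp_pos _)]
      _ ≤ (C * ((k:ℝ) + 1)) * Real.exp (-((k:ℝ) * ((k:ℝ) + 1) * c)) :=
          mul_le_mul (hb k) he (Real.exp_pos _).le hC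
      _ = C * (((k:ℝ) + 1) * Real.exp (-((k:ℝ) * ((k:ℝ) + 1) * c))) := by ring

/-- with `α = (8-κ)(3κ-8)/(32κ)` one has
`α = (1/4 - (1-4/κ)²)κ/8`, `e^{αx} p_κ(x) → -κcos(4π/κ)/(8π)` as `x → ∞`, and
`e^{αx} ∫_x^∞ p_κ → -κcos(4π/κ)/(8πα)`; so the tail of `p_κ` decays like `e^{-αx}`. -/
theorem tail_asymptotics (κ : ℝ) (h1 : 8 / 3 < κ) (h2 : κ < 8)
    (α : ℝ) (hα : α = (8 - κ) * (3 * κ - 8) / (32 * κ)) :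
    α = (1 / 4 - (1 - 4 / κ) ^ 2) * κ / 8 ∧
    Tendsto (fun x : ℝ => Real.exp (α * x) * pdens κ x) atTop
      (𝓝 (-κ * Real.cos (4 * π / κ) / (8 * π))) ∧
    Tendsto (fun x : ℝ => Real.exp (α * x) * ∫ t in Set.Ioi x, pdens κ t) atTop
      (𝓝 (-κ * Real.cos (4 * π / κ) / (8 * π * α))) := by
  have hκ0 : (0:ℝ) < κ := by linarith
  have hπ : (0:ℝ) < π := Real.pi_pos
  have hβ : (1 - 4/κ)^2 < 1/4 := by
    have h4 : 4/κ < 3/2 := by rw [div_lt_iff₀ hκ0]; linarith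
    have h5 : 1/2 < 4/κ := by rw [lt_div_iff₀ hκ0]; linarith
    nlinarith
  have hα1 : α = (1/4 - (1 - 4/κ)^2) * κ / 8 := by
    rw [hα]; field_simp; ring
  have hαpos : 0 < α := by
    rw [hα1]
    apply div_pos (mul_pos (by linarith) hκ0) (by norm_num)
  have hA_pos : ∀ j : ℕ, 0 < acoef κ j := by
    intro j
    have hj : (0:ℝ) ≤ (j:ℝ) := Nat.cast_nonneg j
    have h14 : (1/4:ℝ) ≤ ((j:ℝ)+1/2)^2 := by nlinarith
    simp only [acoef]
    apply div_pos (mul_pos (by nlinarith) hκ0) (by norm_num)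
  have hAα : ∀ j : ℕ, acoef κ j = α + (j:ℝ)*((j:ℝ)+1)*(κ/8) := by
    intro j; simp only [acoef]; rw [hα1]; ring
  refine ⟨hα1, ?_, ?_⟩
  · -- second statement
    have key : ∀ x : ℝ, Real.exp (α*x) * pdens κ x
        = ∑' j : ℕ, (cconst κ * ((-1:ℝ)^j * ((j:ℝ)+1/2)))
            * Real.exp (-((j:ℝ)*((j:ℝ)+1)*(κ/8)) * x) := by
      intro x
      rw [show Real.exp (α*x) * pdens κ x
          = ∑' j : ℕ, (Real.exp (α*x) * cconst κ)
              * ((-1:ℝ)^j * ((j:ℝ)+1/2) * Real.exp (-(acoef κ j * x)))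
        from by rw [tsum_mul_left, pdens_eq]; ring]
      refine tsum_congr fun j => ?_
      have hexp : Real.exp (α*x) * Real.exp (-(acoef κ j * x))
          = Real.exp (-((j:ℝ)*((j:ℝ)+1)*(κ/8)) * x) := by
        rw [← Real.exp_add]; congr 1; rw [hAα j]; ring
      calc (Real.exp (α*x) * cconst κ)
            * ((-1:ℝ)^j * ((j:ℝ)+1/2) * Real.exp (-(acoef κ j * x)))
          = (cconst κ * ((-1:ℝ)^j * ((j:ℝ)+1/2)))
            * (Real.exp (α*x) * Real.exp (-(acoef κ j * x))) := by ring
        _ = _ := by rw [hexp]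
    have hb : ∀ j : ℕ, |cconst κ * ((-1:ℝ)^j * ((j:ℝ)+1/2))| ≤ |cconst κ| * ((j:ℝ)+1) := by
      intro j
      have hj : (0:ℝ) ≤ (j:ℝ) := Nat.cast_nonneg j
      rw [abs_mul, abs_mul, abs_pow, abs_neg, abs_one, one_pow, one_mul,
        abs_of_pos (show (0:ℝ) < (j:ℝ)+1/2 by positivity)]
      nlinarith [abs_nonneg (cconst κ)]
    have ht := tendsto_core (show (0:ℝ) < κ/8 by positivity)
      (fun j => cconst κ * ((-1:ℝ)^j * ((j:ℝ)+1/2))) (|cconst κ|) hb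
    have h2' := ht.congr (fun x => (key x).symm)
    have h0 : cconst κ * ((-1:ℝ)^(0:ℕ) * (((0:ℕ):ℝ)+1/2))
        = -κ * Real.cos (4*π/κ) / (8*π) := by
      simp only [cconst]
      rw [pow_zero]
      push_cast
      rw [one_mul]
      field_simp
      ring
    rwa [show (𝓝 (-κ * Real.cos (4*π/κ) / (8*π))) = 𝓝 (cconst κ * ((-1:ℝ)^(0:ℕ) * (((0:ℕ):ℝ)+1/2))) from by rw [h0]]
  · -- third statement
    have hFint : ∀ (j:ℕ) (x:ℝ), IntegrableOn
        (fun t => (-1:ℝ)^j * ((j:ℝ)+1/2) * Real.exp (-(acoef κ j * t))) (Set.Ioi x) := by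
      intro j x
      simpa [neg_mul, IntegrableOn] using
        (exp_neg_integrableOn_Ioi x (hA_pos j)).const_mul ((-1:ℝ)^j * ((j:ℝ)+1/2))
    have hFval : ∀ (j:ℕ) (x:ℝ),
        (∫ t in Set.Ioi x, (-1:ℝ)^j * ((j:ℝ)+1/2) * Real.exp (-(acoef κ j * t)))
        = (-1:ℝ)^j * ((j:ℝ)+1/2) * (Real.exp (-(acoef κ j * x)) / acoef κ j) := by
      intro j x
      rw [MeasureTheory.integral_const_mul, my_integral_exp_neg_mul_Ioi (hA_pos j)]
    have hFnorm : ∀ (j:ℕ) (x:ℝ),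
        (∫ t in Set.Ioi x, ‖(-1:ℝ)^j * ((j:ℝ)+1/2) * Real.exp (-(acoef κ j * t))‖)
        = ((j:ℝ)+1/2) * (Real.exp (-(acoef κ j * x)) / acoef κ j) := by
      intro j x
      have hn : ∀ t:ℝ, ‖(-1:ℝ)^j * ((j:ℝ)+1/2) * Real.exp (-(acoef κ j * t))‖
          = ((j:ℝ)+1/2) * Real.exp (-(acoef κ j * t)) := by
        intro t
        rw [norm_mul, norm_mul, Real.norm_eq_abs, Real.norm_eq_abs, Real.norm_eq_abs,
          abs_pow, abs_neg, abs_one, one_pow, one_mul,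
          abs_of_pos (show (0:ℝ) < (j:ℝ)+1/2 by positivity), abs_of_pos (Real.exp_pos _)]
      simp_rw [hn]
      rw [MeasureTheory.integral_const_mul, my_integral_exp_neg_mul_Ioi (hA_pos j)]
    have hsumN : ∀ x:ℝ, 1 ≤ x → Summable
        (fun j:ℕ => ((j:ℝ)+1/2) * (Real.exp (-(acoef κ j * x)) / acoef κ j)) := by
      intro x hx
      refine Summable.of_nonneg_of_le (fun j => mul_nonneg (by positivity) (div_nonneg (Real.exp_pos _).le (hA_pos j).le)) (fun j => ?_)
        ((summable_exp_aux (κ/8) (by positivity)).mul_left (1/α))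
      have hj : (0:ℝ) ≤ (j:ℝ) := Nat.cast_nonneg j
      have hAj := hA_pos j
      have hd0 : (0:ℝ) ≤ (j:ℝ)*((j:ℝ)+1)*(κ/8) := by positivity
      have hAge : α ≤ acoef κ j := by rw [hAα j]; linarith
      have hdle : (j:ℝ)*((j:ℝ)+1)*(κ/8) ≤ acoef κ j := by rw [hAα j]; linarith
      have he : Real.exp (-(acoef κ j * x)) ≤ Real.exp (-((j:ℝ)*((j:ℝ)+1)*(κ/8))) := by
        apply Real.exp_le_exp.mpr
        nlinarith
      calc ((j:ℝ)+1/2) * (Real.exp (-(acoef κ j * x)) / acoef κ j)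
          ≤ ((j:ℝ)+1) * (Real.exp (-((j:ℝ)*((j:ℝ)+1)*(κ/8))) / α) := by
            apply mul_le_mul (by linarith) ?_ (by positivity) (by linarith)
            exact div_le_div₀ (Real.exp_pos _).le he hαpos hAge
        _ = 1/α * (((j:ℝ)+1) * Real.exp (-((j:ℝ)*((j:ℝ)+1)*(κ/8)))) := by ring
    have hint : ∀ x:ℝ, 1 ≤ x → (∫ t in Set.Ioi x, pdens κ t)
        = cconst κ * ∑' j:ℕ, (-1:ℝ)^j * ((j:ℝ)+1/2)
            * (Real.exp (-(acoef κ j * x)) / acoef κ j) := by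
      intro x hx
      have h1' : (∫ t in Set.Ioi x, pdens κ t)
          = ∫ t in Set.Ioi x, cconst κ * ∑' j:ℕ, (-1:ℝ)^j * ((j:ℝ)+1/2)
              * Real.exp (-(acoef κ j * t)) :=
        MeasureTheory.integral_congr_ae (Filter.Eventually.of_forall fun t => pdens_eq κ t)
      rw [h1', MeasureTheory.integral_const_mul]
      congr 1
      have h2' := MeasureTheory.integral_tsum_of_summable_integral_norm
        (F := fun (j:ℕ) (t:ℝ) => (-1:ℝ)^j * ((j:ℝ)+1/2) * Real.exp (-(acoef κ j * t)))
        (μ := volume.restrict (Set.Ioi x)) (fun j => hFint j x)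
        ((hsumN x hx).congr (fun j => (hFnorm j x).symm))
      rw [← h2']
      exact tsum_congr fun j => hFval j x
    have key2 : ∀ x:ℝ, 1 ≤ x → Real.exp (α*x) * (∫ t in Set.Ioi x, pdens κ t)
        = ∑' j:ℕ, (cconst κ * ((-1:ℝ)^j * ((j:ℝ)+1/2)) / acoef κ j)
            * Real.exp (-((j:ℝ)*((j:ℝ)+1)*(κ/8)) * x) := by
      intro x hx
      rw [hint x hx]
      rw [show Real.exp (α*x) * (cconst κ * ∑' j:ℕ, (-1:ℝ)^j * ((j:ℝ)+1/2)
            * (Real.exp (-(acoef κ j * x)) / acoef κ j))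
          = ∑' j:ℕ, (Real.exp (α*x) * cconst κ) * ((-1:ℝ)^j * ((j:ℝ)+1/2)
            * (Real.exp (-(acoef κ j * x)) / acoef κ j))
        from by rw [tsum_mul_left]; ring]
      refine tsum_congr fun j => ?_
      have hexp : Real.exp (α*x) * Real.exp (-(acoef κ j * x))
          = Real.exp (-((j:ℝ)*((j:ℝ)+1)*(κ/8)) * x) := by
        rw [← Real.exp_add]; congr 1; rw [hAα j]; ring
      calc (Real.exp (α*x) * cconst κ)
            * ((-1:ℝ)^j * ((j:ℝ)+1/2) * (Real.exp (-(acoef κ j * x)) / acoef κ j))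
          = (cconst κ * ((-1:ℝ)^j * ((j:ℝ)+1/2)) / acoef κ j)
            * (Real.exp (α*x) * Real.exp (-(acoef κ j * x))) := by ring
        _ = _ := by rw [hexp]
    have hb2 : ∀ j:ℕ, |cconst κ * ((-1:ℝ)^j * ((j:ℝ)+1/2)) / acoef κ j|
        ≤ (|cconst κ|/α) * ((j:ℝ)+1) := by
      intro j
      have hj : (0:ℝ) ≤ (j:ℝ) := Nat.cast_nonneg j
      have hAge : α ≤ acoef κ j := by
        rw [hAα j]
        have : (0:ℝ) ≤ (j:ℝ)*((j:ℝ)+1)*(κ/8) := by positivity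
        linarith
      calc |cconst κ * ((-1:ℝ)^j * ((j:ℝ)+1/2)) / acoef κ j|
          = |cconst κ| * ((j:ℝ)+1/2) / acoef κ j := by
            rw [abs_div, abs_mul, abs_mul, abs_pow, abs_neg, abs_one, one_pow, one_mul,
              abs_of_pos (hA_pos j), abs_of_pos (show (0:ℝ) < (j:ℝ)+1/2 by positivity)]
        _ ≤ |cconst κ| * ((j:ℝ)+1) / α :=
            div_le_div₀ (by positivity) (by nlinarith [abs_nonneg (cconst κ)]) hαpos hAge
        _ = (|cconst κ|/α) * ((j:ℝ)+1) := by ring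
    have ht := tendsto_core (show (0:ℝ) < κ/8 by positivity)
      (fun j => cconst κ * ((-1:ℝ)^j * ((j:ℝ)+1/2)) / acoef κ j) (|cconst κ|/α) hb2
    have heq : (fun x:ℝ => Real.exp (α*x) * ∫ t in Set.Ioi x, pdens κ t)
        =ᶠ[atTop] (fun x:ℝ => ∑' j:ℕ, (cconst κ * ((-1:ℝ)^j * ((j:ℝ)+1/2)) / acoef κ j)
            * Real.exp (-((j:ℝ)*((j:ℝ)+1)*(κ/8)) * x)) := by
      filter_upwards [eventually_ge_atTop (1:ℝ)] with x hx using key2 x hx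
    have hfin := ht.congr' heq.symm
    have hA0 : acoef κ 0 = α := by
      rw [hAα 0]; push_cast; ring
    have h0 : cconst κ * ((-1:ℝ)^(0:ℕ) * (((0:ℕ):ℝ)+1/2)) / acoef κ 0
        = -κ * Real.cos (4*π/κ) / (8*π*α) := by
      rw [hA0]
      simp only [cconst]
      rw [pow_zero]
      push_cast
      rw [one_mul]
      field_simp
      ring
    rwa [show (𝓝 (-κ * Real.cos (4*π/κ) / (8*π*α))) = 𝓝 (cconst κ * ((-1:ℝ)^(0:ℕ) * (((0:ℕ):ℝ)+1/2)) / acoef κ 0) from by rw [h0]]
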